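/- Triangular inequality for the inertia: for all x_1,…,x_k ∈ H_n with k ≥ 2 and all y ∈ H_n, (k-1) · m(x_1,…,x_k) ≤ ∑_{i=1}^k m(x_1,…,x_{i-1},y,x_{i+1},…,x_k), where in the i-th summand x_i is replaced by y. (Equivalently, r̄(x_1,…,x_k) ≤ (1/(k-1)) ∑_{i=1}^k r̄(x_1,…,x_{i-1},y,x_{i+1},…,x_k).) -/

import Mathlib

/-- The inertia of a `k`-tuple of points of `H_n`: `min_y ∑ᵢ d(y, xᵢ)`
(the average radius is the inertia divided by `k`). -/
def inertia {n k : ℕ} (x : Fin k → Fin n → ZMod 2) : ℕ :=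
  Finset.inf' Finset.univ Finset.univ_nonempty
    (fun y : Fin n → ZMod 2 => ∑ i, hammingDist y (x i))

/-!
Both sides split over the coordinates: a centre can be chosen coordinatewise, so the inertia is
`∑_c min(#zeros, #ones)` of the columns `c`. For one column with `p` entries equal to the new
letter `b` and `q` others, replacing an entry equal to `b` changes nothing, while replacing one
of the `q` others yields the counts `p + 1, q - 1`; the claim for that column becomes
`(p + q - 1) min(p, q) ≤ p min(p, q) + q min(p + 1, q - 1)`.

The splitting is essential: in a general metric space the inequality fails (the path metric
with `d(zᵢ, xⱼ) = 1` for `i ≠ j` and `d(zᵢ, y) = 1/2`, `i, j ≤ 3`, has `2 m(x) = 8` while the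
right-hand side is at most `15/2`).
-/

open Finset Function

theorem Finset.inf'_univ_pi_sum {β : Type*} [Fintype β] [DecidableEq β] {α : β → Type*}
    [∀ c, Fintype (α c)] [∀ c, Nonempty (α c)] {M : Type*} [AddCommMonoid M] [LinearOrder M]
    [IsOrderedAddMonoid M] (f : ∀ c, α c → M) :
    univ.inf' univ_nonempty (fun y : ∀ c, α c => ∑ c, f c (y c))
      = ∑ c, univ.inf' univ_nonempty (f c) := by
  refine le_antisymm ?_ (le_inf' _ _ fun y _ => sum_le_sum fun c _ => inf'_le _ (mem_univ _))
  have hmin : ∀ c, ∃ b, univ.inf' univ_nonempty (f c) = f c b := fun c =>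
    exists_mem_eq_inf' univ_nonempty (f c) |>.imp fun _ => And.right
  choose y hy using hmin
  exact (inf'_le _ (mem_univ y)).trans_eq (sum_congr rfl fun c _ => (hy c).symm)

def coordInertia {ι α : Type*} [Fintype ι] [Fintype α] [Nonempty α] [DecidableEq α]
    (a : ι → α) : ℕ :=
  univ.inf' univ_nonempty fun b => #{i | a i ≠ b}

theorem sum_hammingDist_eq_sum_card {ι β : Type*} [Fintype ι] [Fintype β] {α : β → Type*}
    [∀ c, DecidableEq (α c)] (x : ι → ∀ c, α c) (y : ∀ c, α c) :
    ∑ i, hammingDist y (x i) = ∑ c, #{i | x i c ≠ y c} := by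
  simp only [hammingDist, card_filter]
  rw [sum_comm]
  simp only [ne_comm]

theorem inertia_eq_sum_coordInertia {n k : ℕ} (x : Fin k → Fin n → ZMod 2) :
    inertia x = ∑ c, coordInertia fun i => x i c := by
  simp only [inertia, coordInertia, sum_hammingDist_eq_sum_card]
  exact inf'_univ_pi_sum (fun c b => #{i | x i c ≠ b})

theorem coordInertia_zmod_two {ι : Type*} [Fintype ι] (a : ι → ZMod 2) (b : ZMod 2) :
    coordInertia a = min #{i | a i = b} #{i | a i ≠ b} := by
  have hflip : ∀ z : ZMod 2, z ≠ b + 1 ↔ z = b := by revert b; decide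
  have hcases : ∀ c : ZMod 2, c = b ∨ c = b + 1 := by revert b; decide
  unfold coordInertia
  refine le_antisymm (le_min ?_ ?_) (le_inf' _ _ fun c _ => ?_)
  · simpa only [hflip] using inf'_le (fun c => #{i | a i ≠ c}) (mem_univ (b + 1))
  · exact inf'_le (fun c => #{i | a i ≠ c}) (mem_univ b)
  · rcases hcases c with rfl | rfl
    · exact min_le_right _ _
    · simpa only [hflip] using min_le_left _ _

theorem Nat.add_sub_one_mul_min_le (p q : ℕ) :
    (p + q - 1) * min p q ≤ p * min p q + q * min (p + 1) (q - 1) := by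
  rcases le_total (p + 1) (q - 1) with h | h
  · rw [min_eq_left (by omega : p ≤ q), min_eq_left h]
    calc (p + q - 1) * p ≤ p * p + q * p := by rw [← add_mul]; gcongr; omega
      _ ≤ p * p + q * (p + 1) := by gcongr; omega
  · rw [min_eq_right h]
    calc (p + q - 1) * min p q = p * min p q + (q - 1) * min p q := by
          rcases Nat.eq_zero_or_pos q with rfl | hq
          · simp
          · rw [← add_mul]; congr 1; omega
      _ ≤ p * min p q + q * (q - 1) := by
          rw [mul_comm q]
          gcongr
          exact min_le_right _ _

section update

variable {ι α : Type*} [Fintype ι] [DecidableEq ι] [DecidableEq α]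

theorem Finset.filter_update_eq (a : ι → α) (i : ι) (b : α) :
    univ.filter (fun j => update a i b j = b) = insert i (univ.filter fun j => a j = b) := by
  ext j
  by_cases hj : j = i <;> simp [update_apply, hj]

theorem Finset.filter_update_ne (a : ι → α) (i : ι) (b : α) :
    univ.filter (fun j => update a i b j ≠ b) = (univ.filter fun j => a j ≠ b).erase i := by
  ext j
  by_cases hj : j = i <;> simp [update_apply, hj]

end update

theorem card_sub_one_mul_coordInertia_le {ι : Type*} [Fintype ι] [DecidableEq ι]
    (a : ι → ZMod 2) (b : ZMod 2) :
    (Fintype.card ι - 1) * coordInertia a ≤ ∑ i, coordInertia (update a i b) := by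
  set p := #{j | a j = b}
  set q := #{j | a j ≠ b}
  have hcard : p + q = Fintype.card ι := card_filter_add_card_filter_not _
  have hsame : ∀ i ∈ ({i | a i = b} : Finset ι), coordInertia (update a i b) = min p q := by
    intro i hi
    obtain rfl := (mem_filter.1 hi).2
    rw [update_eq_self, coordInertia_zmod_two _ (a i)]
  have hflip : ∀ i ∈ ({i | a i ≠ b} : Finset ι),
      coordInertia (update a i b) = min (p + 1) (q - 1) := by
    intro i hi
    have hi := (mem_filter.1 hi).2
    rw [coordInertia_zmod_two _ b, filter_update_eq, filter_update_ne,
      card_insert_of_notMem (by simp [hi]), card_erase_of_mem (by simp [hi])]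
  rw [← sum_filter_add_sum_filter_not univ (fun i => a i = b), sum_congr rfl hsame,
    sum_congr rfl hflip, sum_const, sum_const, smul_eq_mul, smul_eq_mul,
    coordInertia_zmod_two a b, ← hcard]
  exact Nat.add_sub_one_mul_min_le p q

theorem inertia_triangle_general {n k : ℕ}
    (x : Fin k → Fin n → ZMod 2) (y : Fin n → ZMod 2) :
    (k - 1) * inertia x ≤ ∑ i : Fin k, inertia (Function.update x i y) := by
  have hcol : ∀ i c, (fun j => update x i y j c) = update (fun j => x j c) i (y c) :=
    fun i c => funext (apply_update (fun _ z => z c) x i y)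
  simp only [inertia_eq_sum_coordInertia, hcol]
  rw [sum_comm, mul_sum]
  gcongr with c
  simpa only [Fintype.card_fin] using card_sub_one_mul_coordInertia_le (fun j => x j c) (y c)

/-- Triangular inequality for the inertia:
`(k-1)·m(x₁,…,x_k) ≤ ∑ᵢ m(x₁,…,x_{i-1}, y, x_{i+1},…,x_k)`. -/
theorem inertia_triangle {n k : ℕ} (hk : 2 ≤ k)
    (x : Fin k → Fin n → ZMod 2) (y : Fin n → ZMod 2) :
    (k - 1) * inertia x ≤ ∑ i : Fin k, inertia (Function.update x i y) :=
  inertia_triangle_general x y
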